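/- Let h = 2k+1 be odd and let A be the adjacency matrix of a regular tournament of order h with valency k. Let D be the (2h+2)×(2h+2) integer matrix given in block form (with blocks of sizes 1, h, 1, h) by D = [[0, 𝟏ᵀ, 0, 𝟎ᵀ], [𝟎, A, 𝟏, Aᵀ], [0, 𝟎ᵀ, 0, 𝟏ᵀ], [𝟏, Aᵀ, 𝟎, A]], where 𝟎 and 𝟏 denote the h-dimensional all-zeros and all-ones column vectors. Then M(D) is the adjacency matrix of a directed strongly regular graph with parameters (4(h+1), 2h+1, h+1, h, h); that is, M(D)·M(D) = h·J + I (equivalently M(D)² = (h+1)·I + h·M(D) + h·(J − I − M(D))) and M(D)·J = J·M(D) = (2h+1)·J. -/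

import Mathlib

open Matrix Kronecker

/-- The all-ones square matrix over `ℤ` indexed by `α`. -/
def allOnes (α : Type*) : Matrix α α ℤ := Matrix.of fun _ _ => 1

/-- `B` is the adjacency matrix of a directed strongly regular graph
with parameters `(n, k, t, l, m)`. -/
def IsAdjDSRG {α : Type*} [Fintype α] [DecidableEq α]
    (B : Matrix α α ℤ) (n k t l m : ℤ) : Prop :=
  (Fintype.card α : ℤ) = n ∧
  (∀ i j, B i j = 0 ∨ B i j = 1) ∧
  (∀ i, B i i = 0) ∧
  B * B = t • (1 : Matrix α α ℤ) + l • B + m • (allOnes α - 1 - B) ∧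
  B * allOnes α = k • allOnes α ∧
  allOnes α * B = k • allOnes α

/-- `A` is the adjacency matrix of a regular tournament of order `n` with valency `k`. -/
def IsRegularTournament {n : ℕ} (k : ℕ) (A : Matrix (Fin n) (Fin n) ℤ) : Prop :=
  (∀ i j, A i j = 0 ∨ A i j = 1) ∧
  (∀ i, A i i = 0) ∧
  A + Aᵀ = allOnes (Fin n) - 1 ∧
  A * allOnes (Fin n) = (k : ℤ) • allOnes (Fin n) ∧
  allOnes (Fin n) * A = (k : ℤ) • allOnes (Fin n)

/-- The block matrix `M(X) = [[X, Xᵀ + I], [X + I, Xᵀ]]`. -/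
def MBlock {α : Type*} [DecidableEq α] (X : Matrix α α ℤ) :
    Matrix (α ⊕ α) (α ⊕ α) ℤ :=
  Matrix.fromBlocks X (Xᵀ + 1) (X + 1) Xᵀ

/-!
With `S = D + Dᵀ`, the blocks of `M(D)²` are `S D + S` and `S Dᵀ + S`, the diagonal
ones plus `I`. Here `D = [[E, Eᵀ], [Eᵀ, E]]`, where `E` (the tournament `A` with a new
vertex beating all others) satisfies `G := E + Eᵀ = J - I` on `h + 1` vertices. Hence
every block of `S` is `G`, and every block of `S D` and of `S Dᵀ` is
`G (E + Eᵀ) = G² = h J - G`, so `M(D)² = h J + I`. The same identity `E + Eᵀ = J - I`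
makes all row and column sums of `D` equal to `h`.
-/

def IsZeroOne {m n : Type*} (X : Matrix m n ℤ) : Prop := ∀ i j, X i j = 0 ∨ X i j = 1

section ZeroOne

variable {l m n o : Type*}

theorem isZeroOne_zero : IsZeroOne (0 : Matrix m n ℤ) := fun _ _ => .inl rfl

theorem isZeroOne_of_one : IsZeroOne (of fun _ _ => 1 : Matrix m n ℤ) := fun _ _ => .inr rfl

theorem IsZeroOne.transpose {X : Matrix m n ℤ} (hX : IsZeroOne X) : IsZeroOne Xᵀ :=
  fun i j => hX j i

theorem IsZeroOne.fromBlocks {A : Matrix n l ℤ} {B : Matrix n m ℤ} {C : Matrix o l ℤ}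
    {D : Matrix o m ℤ} (hA : IsZeroOne A) (hB : IsZeroOne B) (hC : IsZeroOne C)
    (hD : IsZeroOne D) : IsZeroOne (fromBlocks A B C D) := by
  rintro (i | i) (j | j)
  exacts [hA i j, hB i j, hC i j, hD i j]

theorem IsZeroOne.add_one [DecidableEq n] {X : Matrix n n ℤ} (hX : IsZeroOne X)
    (hdiag : ∀ i, X i i = 0) : IsZeroOne (X + 1) := by
  intro i j
  rcases eq_or_ne i j with rfl | hij
  · simp [hdiag]
  · simpa [one_apply_ne hij] using hX i j

theorem IsZeroOne.MBlock [DecidableEq n] {X : Matrix n n ℤ} (hX : IsZeroOne X)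
    (hdiag : ∀ i, X i i = 0) : IsZeroOne (MBlock X) :=
  hX.fromBlocks (hX.transpose.add_one hdiag) (hX.add_one hdiag) hX.transpose

end ZeroOne

theorem fromBlocks_apply_self_eq_zero {m n : Type*} {A : Matrix m m ℤ} {B : Matrix m n ℤ}
    {C : Matrix n m ℤ} {D : Matrix n n ℤ} (hA : ∀ i, A i i = 0) (hD : ∀ i, D i i = 0) :
    ∀ i, fromBlocks A B C D i i = 0 := by
  rintro (i | i)
  exacts [hA i, hD i]

section AllOnes

variable {α : Type*}

theorem allOnes_sum_self :
    allOnes (α ⊕ α) = fromBlocks (allOnes α) (allOnes α) (allOnes α) (allOnes α) := by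
  ext (i | i) (j | j) <;> rfl

theorem allOnes_mul_allOnes [Fintype α] :
    allOnes α * allOnes α = (Fintype.card α : ℤ) • allOnes α := by
  ext i j
  simp [allOnes, mul_apply]

end AllOnes

section MBlock

variable {α : Type*} [Fintype α] [DecidableEq α]

theorem MBlock_mul_self {X : Matrix α α ℤ} {c : ℤ}
    (hX : (X + Xᵀ) * X + (X + Xᵀ) = c • allOnes α)
    (hXt : (X + Xᵀ) * Xᵀ + (X + Xᵀ) = c • allOnes α) :
    MBlock X * MBlock X = c • allOnes (α ⊕ α) + 1 := by
  rw [MBlock, fromBlocks_multiply, allOnes_sum_self, fromBlocks_smul, ← fromBlocks_one,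
    fromBlocks_add]
  refine fromBlocks_inj.mpr ⟨?_, ?_, ?_, ?_⟩
  · rw [← hX]; noncomm_ring
  · rw [add_zero, ← hXt]; noncomm_ring
  · rw [add_zero, ← hX]; noncomm_ring
  · rw [← hXt]; noncomm_ring

theorem MBlock_mul_allOnes {X : Matrix α α ℤ} {r : ℤ} (hX : X * allOnes α = r • allOnes α)
    (hXt : Xᵀ * allOnes α = r • allOnes α) :
    MBlock X * allOnes (α ⊕ α) = (2 * r + 1) • allOnes (α ⊕ α) := by
  rw [MBlock, allOnes_sum_self, fromBlocks_multiply, fromBlocks_smul]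
  refine fromBlocks_inj.mpr ⟨?_, ?_, ?_, ?_⟩ <;>
    · simp only [add_mul, one_mul, hX, hXt]; module

theorem allOnes_mul_MBlock {X : Matrix α α ℤ} {r : ℤ} (hX : allOnes α * X = r • allOnes α)
    (hXt : allOnes α * Xᵀ = r • allOnes α) :
    allOnes (α ⊕ α) * MBlock X = (2 * r + 1) • allOnes (α ⊕ α) := by
  rw [MBlock, allOnes_sum_self, fromBlocks_multiply, fromBlocks_smul]
  refine fromBlocks_inj.mpr ⟨?_, ?_, ?_, ?_⟩ <;>
    · simp only [mul_add, mul_one, hX, hXt]; module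

end MBlock

def doubleBlock {α : Type*} (E : Matrix α α ℤ) : Matrix (α ⊕ α) (α ⊕ α) ℤ :=
  fromBlocks E Eᵀ Eᵀ E

theorem doubleBlock_transpose {α : Type*} (E : Matrix α α ℤ) :
    (doubleBlock E)ᵀ = doubleBlock Eᵀ := by
  rw [doubleBlock, doubleBlock, fromBlocks_transpose, transpose_transpose]

section Tournament

variable {α : Type*} [Fintype α] [DecidableEq α] {E : Matrix α α ℤ}

theorem mul_self_add_self_of_add_transpose_eq (hE : E + Eᵀ = allOnes α - 1) :
    (E + Eᵀ) * (E + Eᵀ) + (E + Eᵀ) = ((Fintype.card α : ℤ) - 1) • allOnes α := by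
  rw [hE, sub_mul, mul_sub, mul_sub, allOnes_mul_allOnes, mul_one, one_mul, mul_one]
  module

theorem doubleBlock_mul_allOnes (hE : E + Eᵀ = allOnes α - 1) :
    doubleBlock E * allOnes (α ⊕ α) =
      ((Fintype.card α : ℤ) - 1) • allOnes (α ⊕ α) := by
  have hrow : (E + Eᵀ) * allOnes α = ((Fintype.card α : ℤ) - 1) • allOnes α := by
    rw [hE, sub_mul, allOnes_mul_allOnes, one_mul]; module
  rw [doubleBlock, allOnes_sum_self, fromBlocks_multiply, fromBlocks_smul]
  refine fromBlocks_inj.mpr ⟨?_, ?_, ?_, ?_⟩ <;>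
    · rw [← hrow]; noncomm_ring

theorem allOnes_mul_doubleBlock (hE : E + Eᵀ = allOnes α - 1) :
    allOnes (α ⊕ α) * doubleBlock E =
      ((Fintype.card α : ℤ) - 1) • allOnes (α ⊕ α) := by
  have hcol : allOnes α * (E + Eᵀ) = ((Fintype.card α : ℤ) - 1) • allOnes α := by
    rw [hE, mul_sub, allOnes_mul_allOnes, mul_one]; module
  rw [doubleBlock, allOnes_sum_self, fromBlocks_multiply, fromBlocks_smul]
  refine fromBlocks_inj.mpr ⟨?_, ?_, ?_, ?_⟩ <;>
    · rw [← hcol]; noncomm_ring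

theorem doubleBlock_add_transpose_mul_add (hE : E + Eᵀ = allOnes α - 1) :
    (doubleBlock E + (doubleBlock E)ᵀ) * doubleBlock E + (doubleBlock E + (doubleBlock E)ᵀ) =
      ((Fintype.card α : ℤ) - 1) • allOnes (α ⊕ α) := by
  have hsq := mul_self_add_self_of_add_transpose_eq hE
  rw [doubleBlock_transpose, doubleBlock, doubleBlock, transpose_transpose, fromBlocks_add,
    fromBlocks_multiply, fromBlocks_add, allOnes_sum_self, fromBlocks_smul]
  refine fromBlocks_inj.mpr ⟨?_, ?_, ?_, ?_⟩ <;>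
    · rw [← hsq]; noncomm_ring

theorem doubleBlock_add_transpose_mul_transpose_add (hE : E + Eᵀ = allOnes α - 1) :
    (doubleBlock E + (doubleBlock E)ᵀ) * (doubleBlock E)ᵀ +
        (doubleBlock E + (doubleBlock E)ᵀ) =
      ((Fintype.card α : ℤ) - 1) • allOnes (α ⊕ α) := by
  have h := doubleBlock_add_transpose_mul_add (E := Eᵀ) (by rwa [transpose_transpose, add_comm])
  rwa [← doubleBlock_transpose, transpose_transpose, add_comm (doubleBlock E)ᵀ] at h

end Tournament

theorem fromBlocks_source_add_transpose {β : Type*} [DecidableEq β] {A : Matrix β β ℤ}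
    (hA : A + Aᵀ = allOnes β - 1) :
    fromBlocks 0 (of fun _ _ => 1 : Matrix (Fin 1) β ℤ) 0 A +
        (fromBlocks 0 (of fun _ _ => 1 : Matrix (Fin 1) β ℤ) 0 A)ᵀ =
      allOnes (Fin 1 ⊕ β) - 1 := by
  ext (i | i) (j | j)
  · simp [Subsingleton.elim i j, allOnes]
  · simp [allOnes]
  · simp [allOnes]
  · simpa [allOnes, one_apply] using congrFun (congrFun hA i) j

/-- Lemma 6: for a regular tournament `A` of odd order `h = 2k+1`, the
`(2h+2)×(2h+2)` matrix `D = [[0, 𝟏ᵀ, 0, 𝟎ᵀ], [𝟎, A, 𝟏, Aᵀ], [0, 𝟎ᵀ, 0, 𝟏ᵀ],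
[𝟏, Aᵀ, 𝟎, A]]` yields `M(D)`, the adjacency matrix of a
DSRG `(4(h+1), 2h+1, h+1, h, h)`. -/
theorem stmt9 (k : ℕ)
    (A : Matrix (Fin (2 * k + 1)) (Fin (2 * k + 1)) ℤ)
    (hA : IsRegularTournament k A) :
    let h : ℕ := 2 * k + 1
    let E : Matrix (Fin 1 ⊕ Fin (2 * k + 1)) (Fin 1 ⊕ Fin (2 * k + 1)) ℤ :=
      Matrix.fromBlocks 0 (Matrix.of fun _ _ => 1) 0 A
    let F : Matrix (Fin 1 ⊕ Fin (2 * k + 1)) (Fin 1 ⊕ Fin (2 * k + 1)) ℤ :=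
      Matrix.fromBlocks 0 0 (Matrix.of fun _ _ => 1) Aᵀ
    let D := Matrix.fromBlocks E F F E
    IsAdjDSRG (MBlock D)
      (4 * ((h : ℤ) + 1)) (2 * (h : ℤ) + 1) ((h : ℤ) + 1) (h : ℤ) (h : ℤ) ∧
    MBlock D * MBlock D =
      (h : ℤ) • allOnes (((Fin 1 ⊕ Fin (2 * k + 1)) ⊕ (Fin 1 ⊕ Fin (2 * k + 1))) ⊕
        ((Fin 1 ⊕ Fin (2 * k + 1)) ⊕ (Fin 1 ⊕ Fin (2 * k + 1)))) + 1 := by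
  intro h E F D
  obtain ⟨hA01, hAdiag, hAsum, -, -⟩ := hA
  have hE : E + Eᵀ = allOnes _ - 1 := fromBlocks_source_add_transpose hAsum
  have hEt : Eᵀ + Eᵀᵀ = allOnes _ - 1 := by rw [transpose_transpose, add_comm Eᵀ, hE]
  have hD : D = doubleBlock E := by
    simp only [D, doubleBlock, E, F, fromBlocks_transpose, transpose_zero]
    rfl
  have hcard : (Fintype.card (Fin 1 ⊕ Fin (2 * k + 1)) : ℤ) - 1 = h := by simp [h]
  have hE01 : IsZeroOne E := isZeroOne_zero.fromBlocks isZeroOne_of_one isZeroOne_zero hA01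
  have hEdiag : ∀ i, E i i = 0 := fromBlocks_apply_self_eq_zero (fun _ => rfl) hAdiag
  have hDdiag : ∀ i, D i i = 0 := fromBlocks_apply_self_eq_zero hEdiag hEdiag
  have hsq : MBlock D * MBlock D = (h : ℤ) • allOnes _ + 1 := by
    rw [hD, ← hcard]
    exact MBlock_mul_self (doubleBlock_add_transpose_mul_add hE)
      (doubleBlock_add_transpose_mul_transpose_add hE)
  refine ⟨⟨?_, ?_, fromBlocks_apply_self_eq_zero hDdiag hDdiag, ?_, ?_, ?_⟩, hsq⟩
  · simp only [Fintype.card_sum, Fintype.card_fin, h]; push_cast; ring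
  · rw [hD] at hDdiag ⊢
    exact (hE01.fromBlocks hE01.transpose hE01.transpose hE01).MBlock hDdiag
  · rw [hsq]; module
  · rw [hD, ← hcard]
    exact MBlock_mul_allOnes (doubleBlock_mul_allOnes hE)
      (doubleBlock_transpose E ▸ doubleBlock_mul_allOnes hEt)
  · rw [hD, ← hcard]
    exact allOnes_mul_MBlock (allOnes_mul_doubleBlock hE)
      (doubleBlock_transpose E ▸ allOnes_mul_doubleBlock hEt)
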